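/- Uniform conductance bound: Let 𝒞 be an embedded circle pattern for G with admissible labelling α : E(G) → [α₀, π), 0 < α₀ ≤ π/2, and all kites convex. Define μ(e) as the ratio H(e)/L(e) of the kite diagonals. Then there is a constant C₅ = C₅(α₀) such that Σ_{e=[v,w]} μ(e) ≤ C₅ for every interior vertex v, where the sum is over edges incident to v. -/
import Mathlib


open Real Finset

/-- The conductance of a convex kite with exterior intersection angle `α` and half-angle `β`
at one white vertex: `μ_α(β) = sin(2β) + (1 − cos(2β))·cot α`. -/
noncomputable def kiteConductance (α β : ℝ) : ℝ :=
  Real.sin (2 * β) + (1 - Real.cos (2 * β)) * (Real.cos α / Real.sin α)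

lemma cot_le_cot (α₀ α : ℝ) (hα₀ : 0 < α₀) (hα₀' : α₀ ≤ Real.pi / 2)
    (h1 : α₀ ≤ α) (h2 : α < Real.pi) :
    Real.cos α / Real.sin α ≤ Real.cos α₀ / Real.sin α₀ := by
  have hsα₀ : 0 < Real.sin α₀ := Real.sin_pos_of_pos_of_lt_pi hα₀
    (lt_of_le_of_lt hα₀' (by linarith [Real.pi_pos]))
  have hsα : 0 < Real.sin α := Real.sin_pos_of_pos_of_lt_pi (lt_of_lt_of_le hα₀ h1) h2
  have hcα₀ : 0 ≤ Real.cos α₀ := Real.cos_nonneg_of_mem_Icc ⟨by linarith [Real.pi_pos], hα₀'⟩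
  rcases le_or_gt α (Real.pi / 2) with h | h
  · have hcα : Real.cos α ≤ Real.cos α₀ := by
      apply Real.cos_le_cos_of_nonneg_of_le_pi (le_of_lt hα₀) (by linarith) h1
    have hs : Real.sin α₀ ≤ Real.sin α := by
      apply Real.sin_le_sin_of_le_of_le_pi_div_two (by linarith [Real.pi_pos]) h h1
    exact div_le_div₀ hcα₀ hcα hsα₀ hs
  · have hcα : Real.cos α ≤ 0 := Real.cos_nonpos_of_pi_div_two_le_of_le (le_of_lt h)
      (by linarith [Real.pi_pos])
    have : Real.cos α / Real.sin α ≤ 0 := div_nonpos_of_nonpos_of_nonneg hcα hsα.le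
    exact this.trans (div_nonneg hcα₀ hsα₀.le)

lemma term_le (α₀ α β : ℝ) (hα₀ : 0 < α₀) (hα₀' : α₀ ≤ Real.pi / 2)
    (h1 : α₀ ≤ α) (h2 : α < Real.pi) (hβ0 : 0 < β) (hβ1 : β ≤ Real.pi / 2) :
    kiteConductance α β ≤ (2 + Real.pi * (Real.cos α₀ / Real.sin α₀)) * β := by
  have hsα₀ : 0 < Real.sin α₀ := Real.sin_pos_of_pos_of_lt_pi hα₀
    (lt_of_le_of_lt hα₀' (by linarith [Real.pi_pos]))
  have hcα₀ : 0 ≤ Real.cos α₀ := Real.cos_nonneg_of_mem_Icc ⟨by linarith [Real.pi_pos], hα₀'⟩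
  have hcot0 : 0 ≤ Real.cos α₀ / Real.sin α₀ := div_nonneg hcα₀ hsα₀.le
  have h1c : (0:ℝ) ≤ 1 - Real.cos (2 * β) := by linarith [Real.cos_le_one (2 * β)]
  have hsin : Real.sin (2 * β) ≤ 2 * β := Real.sin_le (by linarith)
  have hcos : 1 - Real.cos (2 * β) ≤ 2 * β ^ 2 := by
    have hsq : Real.sin β ^ 2 ≤ β ^ 2 := by
      have hs0 : 0 ≤ Real.sin β := Real.sin_nonneg_of_nonneg_of_le_pi hβ0.le
        (by linarith [Real.pi_pos])
      have := Real.sin_le hβ0.le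
      nlinarith
    have hc2 : Real.cos (2 * β) = 1 - 2 * Real.sin β ^ 2 := by
      rw [Real.cos_two_mul, Real.sin_sq]; ring
    nlinarith
  have hstep : (1 - Real.cos (2 * β)) * (Real.cos α / Real.sin α)
      ≤ (1 - Real.cos (2 * β)) * (Real.cos α₀ / Real.sin α₀) :=
    mul_le_mul_of_nonneg_left (cot_le_cot α₀ α hα₀ hα₀' h1 h2) h1c
  have hstep2 : (1 - Real.cos (2 * β)) * (Real.cos α₀ / Real.sin α₀)
      ≤ (Real.pi * (Real.cos α₀ / Real.sin α₀)) * β := by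
    have : 2 * β ^ 2 ≤ Real.pi * β := by nlinarith
    calc (1 - Real.cos (2 * β)) * (Real.cos α₀ / Real.sin α₀)
        ≤ (2 * β ^ 2) * (Real.cos α₀ / Real.sin α₀) :=
          mul_le_mul_of_nonneg_right hcos hcot0
      _ ≤ (Real.pi * β) * (Real.cos α₀ / Real.sin α₀) :=
          mul_le_mul_of_nonneg_right this hcot0
      _ = (Real.pi * (Real.cos α₀ / Real.sin α₀)) * β := by ring
  unfold kiteConductance
  nlinarith

/-- **uniform conductance bound.**
For `0 < α₀ ≤ π/2` there is a constant `C₅ = C₅(α₀)` such that at any interior vertex of an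
embedded circle pattern with admissible labelling `α : E → [α₀, π)` and convex kites, the sum
of the conductances `μ(e) = H(e)/L(e) = μ_{α(e)}(β(e))` over the incident edges is at most
`C₅`.  Here the incident kites have half-angles `β i` at the vertex, constrained by convexity
to `β i ∈ (max{0, π/2 − α i}, min{π/2, π − α i})`, and embeddedness forces `Σ β i = π`. -/
theorem conductance_sum_bounded (α₀ : ℝ) (hα₀ : 0 < α₀) (hα₀' : α₀ ≤ Real.pi / 2) :
    ∃ C₅ : ℝ, ∀ (m : ℕ) (α β : Fin m → ℝ),
      (∀ i, α₀ ≤ α i ∧ α i < Real.pi) →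
      (∀ i, max 0 (Real.pi / 2 - α i) < β i ∧ β i < min (Real.pi / 2) (Real.pi - α i)) →
      (∑ i, β i = Real.pi) →
      ∑ i, kiteConductance (α i) (β i) ≤ C₅ := by
  refine ⟨(2 + Real.pi * (Real.cos α₀ / Real.sin α₀)) * Real.pi, ?_⟩
  intro m α β hα hβ hsum
  calc ∑ i, kiteConductance (α i) (β i)
      ≤ ∑ i, (2 + Real.pi * (Real.cos α₀ / Real.sin α₀)) * β i := by
        apply Finset.sum_le_sum
        intro i _
        exact term_le α₀ (α i) (β i) hα₀ hα₀' (hα i).1 (hα i).2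
          (lt_of_le_of_lt (le_max_left _ _) (hβ i).1)
          (le_of_lt (lt_of_lt_of_le (hβ i).2 (min_le_left _ _)))
    _ = (2 + Real.pi * (Real.cos α₀ / Real.sin α₀)) * Real.pi := by
        rw [← Finset.mul_sum, hsum]
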